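/- Let E = (C, V) be an election that is single-peaked with respect to a societal axis, with |C| = 2m' and |V| = 2n'. Then E contains an identity subelection with at least m' candidates and at least n' voters. -/
import Mathlib


/-- A single-peaked election with 2m' candidates and 2n' voters contains an
identity subelection with at least m' candidates and at least n' voters. -/
theorem single_peaked_large_identity {Vt C : Type*} [Fintype C] [LinearOrder C]
    (pref : Vt → C → C → Prop)
    (horder : ∀ v : Vt, IsStrictTotalOrder C (pref v))
    (V : Finset Vt) (m' n' : ℕ)
    (hC : Fintype.card C = 2 * m') (hV : V.card = 2 * n')
    (hsp : ∀ v ∈ V, ∃ p : C, ∀ x y : C,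
      ((p ≤ x ∧ x < y) ∨ (y < x ∧ x ≤ p)) → pref v x y) :
    ∃ C' : Finset C, ∃ V' ⊆ V, m' ≤ C'.card ∧ n' ≤ V'.card ∧
      ∀ v ∈ V', ∀ w ∈ V', ∀ c ∈ C', ∀ c' ∈ C', (pref v c c' ↔ pref w c c') := by
  classical
  set e : C ≃o Fin (2 * m') := (Fintype.orderIsoFinOfCardEq C hC).symm with he
  set L : Finset C := Finset.univ.filter (fun x => (e x : ℕ) < m') with hL
  set R : Finset C := Finset.univ.filter (fun x => m' ≤ (e x : ℕ)) with hR
  have hLcard : L.card = m' := by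
    rw [hL]
    rw [Finset.card_bij (fun x _ => (e x : ℕ)) ?_ ?_ ?_ (t := Finset.range m')]
    · exact Finset.card_range m'
    · intro a ha
      simp only [Finset.mem_filter] at ha
      simpa using ha.2
    · intro a ha b hb hab
      have : e a = e b := Fin.ext hab
      exact e.injective this
    · intro b hb
      simp only [Finset.mem_range] at hb
      refine ⟨e.symm ⟨b, by omega⟩, ?_, ?_⟩
      · simp [hb]
      · simp
  have hRcard : R.card = m' := by
    rw [hR]
    rw [Finset.card_bij (fun x _ => (e x : ℕ)) ?_ ?_ ?_ (t := Finset.Ico m' (2 * m'))]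
    · rw [Nat.card_Ico]; omega
    · intro a ha
      simp only [Finset.mem_filter] at ha
      simp only [Finset.mem_Ico]
      exact ⟨ha.2, (e a).isLt⟩
    · intro a ha b hb hab
      exact e.injective (Fin.ext hab)
    · intro b hb
      simp only [Finset.mem_Ico] at hb
      refine ⟨e.symm ⟨b, hb.2⟩, ?_, ?_⟩
      · simp [hb.1]
      · simp
  have asym : ∀ v, ∀ x y : C, pref v x y → ¬ pref v y x := by
    intro v x y hxy hyx
    exact (horder v).irrefl x ((horder v).trans _ _ _ hxy hyx)
  set VL : Finset Vt := V.filter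
    (fun v => ∀ hv : v ∈ V, ((e (hsp v hv).choose : ℕ) < m')) with hVL
  set VR : Finset Vt := V.filter
    (fun v => ¬ ∀ hv : v ∈ V, ((e (hsp v hv).choose : ℕ) < m')) with hVR
  have hsplit : VL.card + VR.card = 2 * n' := by
    rw [hVL, hVR, Finset.card_filter_add_card_filter_not, hV]
  by_cases hcase : n' ≤ VL.card
  · -- peaks on the left: use R, voters agree with axis order
    have key : ∀ v ∈ VL, ∀ c ∈ R, ∀ c' ∈ R, (pref v c c' ↔ c < c') := by
      intro v hv c hc c' hc'
      rw [hVL, Finset.mem_filter] at hv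
      obtain ⟨hvV, hpk⟩ := hv
      set p := (hsp v hvV).choose with hp
      have hspec := (hsp v hvV).choose_spec
      have hple : ∀ x ∈ R, p ≤ x := by
        intro x hx
        rw [hR, Finset.mem_filter] at hx
        have : (e p : ℕ) < (e x : ℕ) := lt_of_lt_of_le (hpk hvV) hx.2
        exact le_of_lt (e.lt_iff_lt.mp this)
      constructor
      · intro hpref
        rcases lt_trichotomy c c' with h | h | h
        · exact h
        · exact absurd (h ▸ hpref) ((horder v).irrefl c')
        · exact absurd hpref (asym v c' c (hspec c' c (Or.inl ⟨hple c' hc', h⟩)))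
      · intro h
        exact hspec c c' (Or.inl ⟨hple c hc, h⟩)
    refine ⟨R, VL, Finset.filter_subset _ _, le_of_eq hRcard.symm, hcase, ?_⟩
    intro v hv w hw c hc c' hc'
    rw [key v hv c hc c' hc', key w hw c hc c' hc']
  · -- peaks on the right: use L, voters agree with reverse axis order
    have hcase' : n' ≤ VR.card := by omega
    have key : ∀ v ∈ VR, ∀ c ∈ L, ∀ c' ∈ L, (pref v c c' ↔ c' < c) := by
      intro v hv c hc c' hc'
      rw [hVR, Finset.mem_filter] at hv
      obtain ⟨hvV, hpk⟩ := hv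
      have hpk' : ¬ ((e (hsp v hvV).choose : ℕ) < m') := by
        intro h; exact hpk (fun _ => h)
      set p := (hsp v hvV).choose with hp
      have hspec := (hsp v hvV).choose_spec
      have hple : ∀ x ∈ L, x ≤ p := by
        intro x hx
        rw [hL, Finset.mem_filter] at hx
        have : (e x : ℕ) < (e p : ℕ) := lt_of_lt_of_le hx.2 (not_lt.mp hpk')
        exact le_of_lt (e.lt_iff_lt.mp this)
      constructor
      · intro hpref
        rcases lt_trichotomy c c' with h | h | h
        · exact absurd hpref (asym v c' c (hspec c' c (Or.inr ⟨h, hple c' hc'⟩)))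
        · exact absurd (h ▸ hpref) ((horder v).irrefl c')
        · exact h
      · intro h
        exact hspec c c' (Or.inr ⟨h, hple c hc⟩)
    refine ⟨L, VR, Finset.filter_subset _ _, le_of_eq hLcard.symm, hcase', ?_⟩
    intro v hv w hw c hc c' hc'
    rw [key v hv c hc c' hc', key w hw c hc c' hc']
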